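/- Let A ∈ ℝ^{m×n} and let R : ℝ^n → ℝ ∪ {+∞} be proper and lower semicontinuous with R non-negative and Ker(R_∞) ∩ Ker(A) = {0}, where R_∞ is the asymptotic function of R. Then for every λ > 0 and every y ∈ ℝ^m, the set of minimizers of F_{y,λ}(x) = ‖y − |Ax|²‖₂² + λ R(x) over x ∈ ℝ^n is non-empty and compact. -/

import Mathlib

open MeasureTheory ProbabilityTheory Filter
open scoped NNReal ENNReal BigOperators

noncomputable section

/-- The Euclidean (`ℓ²`) norm on `Fin n → ℝ`. -/
def enorm2 {n : ℕ} (x : Fin n → ℝ) : ℝ := Real.sqrt (∑ i, x i ^ 2)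

/-- Matrix-vector multiplication for `A ∈ ℝ^{m×n}`. -/
def mulVec' {m n : ℕ} (A : Fin m → Fin n → ℝ) (x : Fin n → ℝ) : Fin m → ℝ :=
  fun i => ∑ j, A i j * x j

/-- The asymptotic (recession) function `R_∞(z) = liminf_{z'→z, t→∞} R(t z')/t`. -/
def asympFun {n : ℕ} (R : (Fin n → ℝ) → EReal) (z : Fin n → ℝ) : EReal :=
  Filter.liminf (fun p : (Fin n → ℝ) × ℝ => R (p.2 • p.1) * ((p.2⁻¹ : ℝ) : EReal))
    ((nhds z) ×ˢ Filter.atTop)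

/-- The noiseless feasible set `{x : |Ax| = √ȳ entrywise}`. -/
def feasSet {m n : ℕ} (A : Fin m → Fin n → ℝ) (ybar : Fin m → ℝ) : Set (Fin n → ℝ) :=
  {x | ∀ r, |mulVec' A x r| = Real.sqrt (ybar r)}

/-- Set of minimizers of `R` over `S`. -/
def argminOn {α β : Type*} [Preorder β] (R : α → β) (S : Set α) : Set α :=
  {x ∈ S | ∀ z ∈ S, R x ≤ R z}

/-- Convexity for `EReal`-valued functions. -/
def ERealConvex {n : ℕ} (R : (Fin n → ℝ) → EReal) : Prop :=
  ∀ x y : Fin n → ℝ, ∀ a b : ℝ, 0 ≤ a → 0 ≤ b → a + b = 1 →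
    R (a • x + b • y) ≤ (a : EReal) * R x + (b : EReal) * R y

/-- Descent cone of `R` at `x̄`. -/
def descentCone {n : ℕ} {β : Type*} [Preorder β] (R : (Fin n → ℝ) → β)
    (xbar : Fin n → ℝ) : Set (Fin n → ℝ) :=
  {z | ∃ t : ℝ, 0 < t ∧ R (xbar + t • z) ≤ R xbar}

/-- Euclidean unit sphere of `ℝⁿ`. -/
def unitSphere (n : ℕ) : Set (Fin n → ℝ) := {x | enorm2 x = 1}

/-- The constant ν = (1/18)√(π/2). -/
def nu : ℝ := (1 / 18) * Real.sqrt (Real.pi / 2)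

/-- Law of a random `m × n` matrix with i.i.d. `N(0, 1/m)` entries. -/
def gaussMatrix (m n : ℕ) : Measure (Fin m → Fin n → ℝ) :=
  Measure.pi fun _ => Measure.pi fun _ => gaussianReal 0 (m : ℝ≥0)⁻¹

/-- Standard Gaussian vector `N(0, Id_n)`. -/
def gaussVec (n : ℕ) : Measure (Fin n → ℝ) := Measure.pi fun _ => gaussianReal 0 1

/-- Dot product. -/
def dot {n : ℕ} (x y : Fin n → ℝ) : ℝ := ∑ i, x i * y i

/-- Gaussian width of S. -/
def gaussianWidth {n : ℕ} (S : Set (Fin n → ℝ)) : ℝ :=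
  ∫ z, sSup ((fun x => dot z x) '' S) ∂(gaussVec n)

/-- `‖A^I x‖₂` : ℓ² norm of the rows of `Ax` indexed by `I`. -/
def rowNorm {m n : ℕ} (A : Fin m → Fin n → ℝ) (I : Finset (Fin m)) (x : Fin n → ℝ) : ℝ :=
  Real.sqrt (∑ i ∈ I, (mulVec' A x i) ^ 2)

/-- Covering number `N(S, δ)` by Euclidean balls of radius `δ` centered in `S`. -/
def coveringNumber {n : ℕ} (S : Set (Fin n → ℝ)) (δ : ℝ) : ℕ :=
  sInf {k : ℕ | ∃ T : Finset (Fin n → ℝ), T.card = k ∧ ↑T ⊆ S ∧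
    S ⊆ ⋃ c ∈ T, {x | enorm2 (x - c) ≤ δ}}

/-- Constrained (Mozorov) feasible set `{x : ‖y − |Ax|²‖₂ ≤ ρ}`. -/
def feasConst {m n : ℕ} (A : Fin m → Fin n → ℝ) (y : Fin m → ℝ) (ρ : ℝ) :
    Set (Fin n → ℝ) :=
  {x | enorm2 (fun i => y i - (mulVec' A x i) ^ 2) ≤ ρ}

/-- Penalized (Tikhonov) objective `F_{y,λ}(x) = ‖y − |Ax|²‖₂² + λ R(x)`. -/
def Fpen {m n : ℕ} (A : Fin m → Fin n → ℝ) (y : Fin m → ℝ) (lam : ℝ)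
    (R : (Fin n → ℝ) → EReal) (x : Fin n → ℝ) : EReal :=
  ((enorm2 (fun i => y i - (mulVec' A x i) ^ 2) ^ 2 : ℝ) : EReal) + (lam : EReal) * R x


/-! The objective is lower semicontinuous, so it suffices that its sublevel sets are bounded
(Weierstrass; the minimizers then form a closed subset of a compact sublevel set). If `x k` runs
off to infinity inside a sublevel set, the data term keeps `A (x k)` bounded and the penalty keeps
`R (x k) ≤ c / λ`. Along a subsequence the directions `x k / ‖x k‖` converge to a unit vector `ζ`;
the first bound gives `A ζ = 0`, the second `R_∞ ζ ≤ 0`, and `R ≥ 0` gives `R_∞ ζ ≥ 0`. So `ζ` lies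
in `Ker R_∞ ∩ Ker A = {0}`, which is absurd. -/

open Set Topology

section Argmin

variable {α β : Type*} [TopologicalSpace α] [LinearOrder β] {f : α → β}

theorem LowerSemicontinuous.argminOn_univ_nonempty {x₀ : α} (hf : LowerSemicontinuous f)
    (hK : IsCompact {x | f x ≤ f x₀}) : (argminOn f univ).Nonempty := by
  obtain ⟨x, hxK, hxmin⟩ := (hf.lowerSemicontinuousOn _).exists_isMinOn ⟨x₀, le_refl (f x₀)⟩ hK
  refine ⟨x, mem_univ x, fun z _ => ?_⟩
  rcases le_total (f z) (f x₀) with hz | hz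
  · exact hxmin hz
  · exact hxK.trans hz

theorem LowerSemicontinuous.isCompact_argminOn_univ {x₀ : α} (hf : LowerSemicontinuous f)
    (hK : IsCompact {x | f x ≤ f x₀}) : IsCompact (argminOn f univ) := by
  have hclosed : IsClosed (argminOn f univ) := by
    have : argminOn f univ = ⋂ z, f ⁻¹' Iic (f z) := by
      ext x; simp [argminOn]
    exact this ▸ isClosed_iInter fun z => hf.isClosed_preimage (f z)
  exact hK.of_isClosed_subset hclosed fun x hx => hx.2 x₀ (mem_univ x₀)

end Argmin

theorem EReal.lowerSemicontinuous_const_mul {α : Type*} [TopologicalSpace α] {g : α → EReal}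
    (hg : LowerSemicontinuous g) {c : ℝ} (hc : 0 < c) :
    LowerSemicontinuous fun x => (c : EReal) * g x := by
  refine lowerSemicontinuous_iff_isClosed_preimage.2 fun b => ?_
  have : (fun x => (c : EReal) * g x) ⁻¹' Iic b = g ⁻¹' Iic (b / c) := by
    ext x
    simp only [mem_preimage, mem_Iic]
    rw [EReal.le_div_iff_mul_le (by exact_mod_cast hc) (EReal.coe_ne_top c), mul_comm]
  exact this ▸ hg.isClosed_preimage _

section Asymptotic

variable {n : ℕ} {R : (Fin n → ℝ) → EReal}

theorem asympFun_nonneg (hR : ∀ x, 0 ≤ R x) (ζ : Fin n → ℝ) :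
    0 ≤ asympFun R ζ := by
  refine le_liminf_of_le isCobounded_ge_of_top ?_
  filter_upwards [Eventually.prod_inr (eventually_ge_atTop 0) (𝓝 ζ)] with p hp
  exact mul_nonneg (hR _) (EReal.coe_nonneg.2 (inv_nonneg.2 hp))

theorem asympFun_nonpos_of_tendsto {ι : Type*} {l : Filter ι} [l.NeBot] {t : ι → ℝ}
    {z : ι → Fin n → ℝ} {ζ : Fin n → ℝ} {C : ℝ}
    (hR : ∀ k, R (t k • z k) ≤ C) (ht : Tendsto t l atTop) (hz : Tendsto z l (𝓝 ζ)) :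
    asympFun R ζ ≤ 0 := by
  have hC : Tendsto (fun k => ((C * (t k)⁻¹ : ℝ) : EReal)) l (𝓝 0) := by
    have := ht.inv_tendsto_atTop.const_mul C
    rw [mul_zero] at this
    exact (continuous_coe_real_ereal.tendsto 0).comp this
  calc asympFun R ζ
      ≤ liminf (fun k => R (t k • z k) * (((t k)⁻¹ : ℝ) : EReal)) l :=
        liminf_le_liminf_of_le (hz.prodMk ht)
    _ ≤ liminf (fun k => ((C * (t k)⁻¹ : ℝ) : EReal)) l := by
        refine liminf_le_liminf ?_
        filter_upwards [ht.eventually_ge_atTop 0] with k hk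
        rw [EReal.coe_mul]
        exact mul_le_mul_of_nonneg_right (hR k) (EReal.coe_nonneg.2 (inv_nonneg.2 hk))
    _ = 0 := hC.liminf_eq

end Asymptotic

section MulVec

variable {m n : ℕ} (A : Fin m → Fin n → ℝ)

theorem continuous_mulVec' : Continuous (mulVec' A) := by
  unfold mulVec'; fun_prop

theorem mulVec'_smul (a : ℝ) (x : Fin n → ℝ) : mulVec' A (a • x) = a • mulVec' A x := by
  ext i
  simp only [mulVec', Pi.smul_apply, smul_eq_mul, Finset.mul_sum, mul_left_comm]

theorem mulVec'_eq_zero_of_tendsto {ι : Type*} {l : Filter ι} [l.NeBot] {t : ι → ℝ}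
    {z : ι → Fin n → ℝ} {ζ : Fin n → ℝ} {B : ℝ} (hA : ∀ k, ‖mulVec' A (t k • z k)‖ ≤ B)
    (ht : Tendsto t l atTop) (hz : Tendsto z l (𝓝 ζ)) : mulVec' A ζ = 0 := by
  refine tendsto_nhds_unique (((continuous_mulVec' A).tendsto ζ).comp hz) ?_
  refine squeeze_zero_norm' ?_ (by simpa using ht.inv_tendsto_atTop.mul_const B)
  filter_upwards [ht.eventually_gt_atTop 0] with k hk
  rw [Function.comp_apply, le_inv_mul_iff₀ hk, ← abs_of_pos hk, ← Real.norm_eq_abs,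
    ← norm_smul, ← mulVec'_smul]
  exact hA k

end MulVec

theorem isBounded_of_le_of_norm_mulVec'_le {m n : ℕ} (A : Fin m → Fin n → ℝ)
    {R : (Fin n → ℝ) → EReal} (hR : ∀ x, 0 ≤ R x)
    (hker : {z : Fin n → ℝ | asympFun R z = 0} ∩ {z | mulVec' A z = 0} = {0})
    {S : Set (Fin n → ℝ)} {C B : ℝ} (hRS : ∀ x ∈ S, R x ≤ C) (hAS : ∀ x ∈ S, ‖mulVec' A x‖ ≤ B) :
    Bornology.IsBounded S := by
  by_contra hS
  obtain ⟨x, hxS, hx⟩ : ∃ x : ℕ → Fin n → ℝ, (∀ k, x k ∈ S) ∧ ∀ k : ℕ, (k : ℝ) < ‖x k‖ := by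
    simp only [isBounded_iff_forall_norm_le, not_exists, not_forall, not_le] at hS
    choose x hxS hx using fun k : ℕ => hS k
    exact ⟨x, hxS, hx⟩
  set t : ℕ → ℝ := fun k => ‖x k‖
  have htpos : ∀ k, 0 < t k := fun k => (Nat.cast_nonneg k).trans_lt (hx k)
  have ht : Tendsto t atTop atTop :=
    tendsto_atTop_mono (fun k => (hx k).le) tendsto_natCast_atTop_atTop
  have hz : ∀ k, (t k)⁻¹ • x k ∈ Metric.sphere (0 : Fin n → ℝ) 1 := fun k => by
    rw [mem_sphere_zero_iff_norm, norm_smul, norm_inv, norm_norm, inv_mul_cancel₀ (htpos k).ne']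
  obtain ⟨ζ, hζ, φ, hφ, hzφ⟩ := (isCompact_sphere (0 : Fin n → ℝ) 1).tendsto_subseq hz
  have htφ : Tendsto (t ∘ φ) atTop atTop := ht.comp hφ.tendsto_atTop
  have hxφ : ∀ k, t (φ k) • (t (φ k))⁻¹ • x (φ k) = x (φ k) :=
    fun k => smul_inv_smul₀ (htpos _).ne' _
  have hRζ : asympFun R ζ = 0 := le_antisymm
    (asympFun_nonpos_of_tendsto (t := t ∘ φ) (fun k => (hxφ k).symm ▸ hRS _ (hxS _)) htφ hzφ)
    (asympFun_nonneg hR ζ)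
  have hAζ : mulVec' A ζ = 0 :=
    mulVec'_eq_zero_of_tendsto A (t := t ∘ φ) (fun k => (hxφ k).symm ▸ hAS _ (hxS _)) htφ hzφ
  have hζ0 : ζ = 0 := hker.subset ⟨hRζ, hAζ⟩
  simp [hζ0] at hζ

section Tikhonov

variable {m n : ℕ} {A : Fin m → Fin n → ℝ} {y : Fin m → ℝ} {lam : ℝ}
  {R : (Fin n → ℝ) → EReal}

theorem norm_mulVec'_le_of_misfit_le {x : Fin n → ℝ} {c : ℝ}
    (h : enorm2 (fun i => y i - mulVec' A x i ^ 2) ^ 2 ≤ c) : ‖mulVec' A x‖ ≤ √(‖y‖ + √c) := by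
  refine (pi_norm_le_iff_of_nonneg (Real.sqrt_nonneg _)).2 fun i => ?_
  rw [enorm2, Real.sq_sqrt (by positivity)] at h
  have hi : |y i - mulVec' A x i ^ 2| ≤ √c := Real.abs_le_sqrt <|
    (Finset.single_le_sum (f := fun j => (y j - mulVec' A x j ^ 2) ^ 2)
      (fun j _ => sq_nonneg _) (Finset.mem_univ i)).trans h
  have hy : |y i| ≤ ‖y‖ := norm_le_pi_norm y i
  rw [Real.norm_eq_abs, ← Real.sqrt_sq_eq_abs]
  exact Real.sqrt_le_sqrt (by linarith [(abs_le.1 hi).1, le_abs_self (y i)])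

theorem le_and_norm_mulVec'_le_of_Fpen_le (hlam : 0 < lam) (hR : ∀ x, 0 ≤ R x) {c : ℝ}
    {x : Fin n → ℝ} (hx : Fpen A y lam R x ≤ c) :
    R x ≤ ((c / lam : ℝ) : EReal) ∧ ‖mulVec' A x‖ ≤ √(‖y‖ + √c) := by
  have hmisfit : (0 : EReal) ≤ ((enorm2 (fun i => y i - mulVec' A x i ^ 2) ^ 2 : ℝ) : EReal) :=
    EReal.coe_nonneg.2 (sq_nonneg _)
  have hpenalty : 0 ≤ (lam : EReal) * R x := mul_nonneg (EReal.coe_nonneg.2 hlam.le) (hR x)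
  constructor
  · rw [EReal.coe_div, EReal.le_div_iff_mul_le (by exact_mod_cast hlam) (EReal.coe_ne_top _),
      mul_comm]
    exact (le_add_of_nonneg_left hmisfit).trans hx
  · exact norm_mulVec'_le_of_misfit_le
      (EReal.coe_le_coe_iff.1 ((le_add_of_nonneg_right hpenalty).trans hx))

theorem lowerSemicontinuous_Fpen (hlam : 0 < lam) (hR : LowerSemicontinuous R) :
    LowerSemicontinuous (Fpen A y lam R) := by
  have hmisfit : Continuous fun x => enorm2 (fun i => y i - mulVec' A x i ^ 2) ^ 2 := by
    unfold enorm2 mulVec'; fun_prop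
  exact (continuous_coe_real_ereal.comp hmisfit).lowerSemicontinuous.add'
    (EReal.lowerSemicontinuous_const_mul hR hlam)
    fun _ => EReal.continuousAt_add (.inl (EReal.coe_ne_top _)) (.inl (EReal.coe_ne_bot _))

theorem Fpen_ne_top {x : Fin n → ℝ} (hx : R x ≠ ⊤) (hx₀ : 0 ≤ R x) : Fpen A y lam R x ≠ ⊤ := by
  rw [Fpen, ← EReal.coe_toReal hx (EReal.bot_lt_zero.trans_le hx₀).ne', ← EReal.coe_mul,
    ← EReal.coe_add]
  exact EReal.coe_ne_top _

theorem isCompact_Fpen_sublevel (hlam : 0 < lam) (hRlsc : LowerSemicontinuous R)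
    (hR : ∀ x, 0 ≤ R x)
    (hker : {z : Fin n → ℝ | asympFun R z = 0} ∩ {z | mulVec' A z = 0} = {0})
    {c : EReal} (hc : c ≠ ⊤) : IsCompact {x | Fpen A y lam R x ≤ c} := by
  have hsub : {x | Fpen A y lam R x ≤ c} ⊆ {x | Fpen A y lam R x ≤ (c.toReal : EReal)} :=
    fun x hx => hx.trans (EReal.le_coe_toReal hc)
  refine Metric.isCompact_of_isClosed_isBounded
    ((lowerSemicontinuous_Fpen hlam hRlsc).isClosed_preimage c) (Bornology.IsBounded.subset ?_ hsub)
  exact isBounded_of_le_of_norm_mulVec'_le A hR hker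
    (fun x hx => (le_and_norm_mulVec'_le_of_Fpen_le hlam hR hx).1)
    (fun x hx => (le_and_norm_mulVec'_le_of_Fpen_le hlam hR hx).2)

end Tikhonov

theorem statement14_general {m n : ℕ} (A : Fin m → Fin n → ℝ)
    (R : (Fin n → ℝ) → EReal)
    (hRproper : ∃ x, R x ≠ ⊤)
    (hRlsc : LowerSemicontinuous R)
    (hRnonneg : ∀ x, 0 ≤ R x)
    (hker : {z : Fin n → ℝ | asympFun R z = 0} ∩ {z | mulVec' A z = 0} = {0}) :
    ∀ lam : ℝ, 0 < lam → ∀ y : Fin m → ℝ,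
      (argminOn (Fpen A y lam R) Set.univ).Nonempty ∧
        IsCompact (argminOn (Fpen A y lam R) Set.univ) := by
  intro lam hlam y
  obtain ⟨x₀, hx₀⟩ := hRproper
  have hF := lowerSemicontinuous_Fpen (A := A) (y := y) hlam hRlsc
  have hK : IsCompact {x | Fpen A y lam R x ≤ Fpen A y lam R x₀} :=
    isCompact_Fpen_sublevel hlam hRlsc hRnonneg hker (Fpen_ne_top hx₀ (hRnonneg x₀))
  exact ⟨hF.argminOn_univ_nonempty hK, hF.isCompact_argminOn_univ hK⟩

/-- existence and compactness of the set of minimizers of the penalized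
(Tikhonov) phase retrieval problem, for every `λ > 0` and every `y`. -/
theorem statement14 {m n : ℕ} (A : Fin m → Fin n → ℝ)
    (R : (Fin n → ℝ) → EReal)
    (hRbot : ∀ x, R x ≠ ⊥)
    (hRproper : ∃ x, R x ≠ ⊤)
    (hRlsc : LowerSemicontinuous R)
    (hRnonneg : ∀ x, 0 ≤ R x)
    (hker : {z : Fin n → ℝ | asympFun R z = 0} ∩ {z | mulVec' A z = 0} = {0}) :
    ∀ lam : ℝ, 0 < lam → ∀ y : Fin m → ℝ,
      (argminOn (Fpen A y lam R) Set.univ).Nonempty ∧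
        IsCompact (argminOn (Fpen A y lam R) Set.univ) :=
  statement14_general A R hRproper hRlsc hRnonneg hker

end
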